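/- arXiv:0901.3452 — 5 statements merged into one kernel-verified Lean document; each statement's English description precedes it below -/
import Mathlib

section
/- The series ∑_{n=1}^∞ H_n / n^2 converges and equals 2 ζ(3). -/
/-!
Write `a = m + 1`, `b = n + 1`. The row sums of the double series `S = ∑_{a,b ≥ 1} 1/(a b (a+b))`
telescope to `H_a / a²`, so `S` is the Euler sum. The partial fraction
`1/(a b (a+b)) = 1/(a (a+b)²) + 1/(b (a+b)²)` and the symmetry `a ↔ b` give `S = 2T` with
`T = ∑ 1/(a (a+b)²)`; grouping `T` by `c = a + b` gives `T = ∑_c H_{c-1} / c² = S - ζ(3)`.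
Hence `S = 2ζ(3)`.
-/

open Finset Filter Topology

theorem hasSum_sub_add_of_antitone {f : ℕ → ℝ} (hf : Antitone f)
    (hf₀ : Tendsto f atTop (𝓝 0)) (k : ℕ) :
    HasSum (fun m => f m - f (m + k)) (∑ i ∈ range k, f i) := by
  refine (hasSum_iff_tendsto_nat_of_nonneg
    (fun m => sub_nonneg.2 (hf (m.le_add_right k))) _).2 ?_
  have partial_sum (N : ℕ) : ∑ m ∈ range N, (f m - f (m + k)) =
      ∑ i ∈ range k, f i - ∑ i ∈ range k, f (N + i) := by
    have h₁ := sum_range_add f N k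
    have h₂ := sum_range_add f k N
    rw [add_comm k N] at h₂
    simp only [sum_sub_distrib, add_comm _ k]
    linarith
  have tail : Tendsto (fun N => ∑ i ∈ range k, f (N + i)) atTop (𝓝 0) := by
    simpa using tendsto_finsetSum (range k) fun i _ => hf₀.comp (tendsto_add_atTop_nat i)
  simpa [partial_sum] using tendsto_const_nhds.sub tail

theorem cast_harmonic_eq_sum (n : ℕ) :
    (harmonic n : ℝ) = ∑ i ∈ range n, 1 / ((i : ℝ) + 1) := by
  simp [harmonic]

theorem hasSum_one_div_add_one_sub (k : ℕ) :
    HasSum (fun m : ℕ => 1 / ((m : ℝ) + 1) - 1 / ((m : ℝ) + k + 1)) (harmonic k) := by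
  have anti : Antitone fun j : ℕ => 1 / ((j : ℝ) + 1) := fun _ _ => Nat.one_div_le_one_div
  simpa [cast_harmonic_eq_sum, add_assoc] using
    hasSum_sub_add_of_antitone anti tendsto_one_div_add_atTop_nhds_zero_nat k

noncomputable def eulerKernel (p : ℕ × ℕ) : ℝ := 1 / ((p.1 + 1) * (p.2 + 1) * (p.1 + p.2 + 2))

theorem eulerKernel_le (m n : ℕ) :
    eulerKernel (m, n) ≤ 1 / ((m : ℝ) + 1) ^ (3 / 2 : ℝ) * (1 / ((n : ℝ) + 1) ^ (3 / 2 : ℝ)) := by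
  have three_halves {x : ℝ} (hx : 0 < x) : x ^ (3 / 2 : ℝ) = x * x ^ (1 / 2 : ℝ) := by
    rw [← Real.rpow_one_add' hx.le (by norm_num)]; norm_num
  have amgm : ((m : ℝ) + 1) ^ (1 / 2 : ℝ) * ((n : ℝ) + 1) ^ (1 / 2 : ℝ) ≤ (m : ℝ) + n + 2 := by
    have := Real.geom_mean_le_arith_mean2_weighted (w₁ := 1 / 2) (w₂ := 1 / 2)
      (p₁ := (m : ℝ) + 1) (p₂ := (n : ℝ) + 1) (by norm_num) (by norm_num) (by positivity)
      (by positivity) (by norm_num)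
    linarith
  rw [eulerKernel, three_halves (by positivity), three_halves (by positivity), div_mul_div_comm,
    one_mul]
  gcongr 1 / ?_
  calc _ = ((m : ℝ) + 1) * (n + 1) *
        (((m : ℝ) + 1) ^ (1 / 2 : ℝ) * ((n : ℝ) + 1) ^ (1 / 2 : ℝ)) := by ring
    _ ≤ _ := by gcongr

theorem summable_eulerKernel : Summable eulerKernel := by
  have h : Summable fun n : ℕ => 1 / ((n : ℝ) + 1) ^ (3 / 2 : ℝ) := by
    refine ((Real.summable_one_div_nat_add_rpow 1 (3 / 2)).2 (by norm_num)).congr fun n => ?_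
    rw [abs_of_pos n.cast_add_one_pos]
  refine (h.mul_of_nonneg h (fun _ => by positivity) (fun _ => by positivity)).of_nonneg_of_le
    (fun _ => by rw [eulerKernel]; positivity) fun ⟨m, n⟩ => eulerKernel_le m n

theorem hasSum_eulerKernel_fiber (n : ℕ) :
    HasSum (fun m => eulerKernel (n, m)) (harmonic (n + 1) / ((n : ℝ) + 1) ^ 2) := by
  refine ((hasSum_one_div_add_one_sub (n + 1)).div_const (((n : ℝ) + 1) ^ 2)).congr_fun
    fun m => ?_
  rw [eulerKernel]
  push_cast
  field_simp
  ring

theorem hasSum_harmonic_succ_div_sq_tsum_eulerKernel :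
    HasSum (fun n : ℕ => (harmonic (n + 1) : ℝ) / ((n : ℝ) + 1) ^ 2) (∑' p, eulerKernel p) :=
  summable_eulerKernel.hasSum.prod_fiberwise hasSum_eulerKernel_fiber

noncomputable def eulerHalfKernel (p : ℕ × ℕ) : ℝ := 1 / ((p.1 + 1) * (p.1 + p.2 + 2) ^ 2)

theorem eulerKernel_eq_add_swap (p : ℕ × ℕ) :
    eulerKernel p = eulerHalfKernel p + eulerHalfKernel p.swap := by
  obtain ⟨m, n⟩ := p
  simp only [eulerKernel, eulerHalfKernel, Prod.swap_prod_mk]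
  field_simp
  ring

theorem eulerHalfKernel_nonneg (p : ℕ × ℕ) : 0 ≤ eulerHalfKernel p := by
  rw [eulerHalfKernel]; positivity

theorem summable_eulerHalfKernel : Summable eulerHalfKernel :=
  summable_eulerKernel.of_nonneg_of_le eulerHalfKernel_nonneg fun p => by
    rw [eulerKernel_eq_add_swap]; linarith [eulerHalfKernel_nonneg p.swap]

theorem tsum_eulerKernel_eq : ∑' p, eulerKernel p = 2 * ∑' p, eulerHalfKernel p := by
  have h := summable_eulerHalfKernel.hasSum
  have := (h.add ((Equiv.prodComm ℕ ℕ).hasSum_iff.2 h)).congr_fun eulerKernel_eq_add_swap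
  rw [this.tsum_eq]; ring

theorem hasSum_harmonic_div_sq_tsum_eulerHalfKernel :
    HasSum (fun b : ℕ => (harmonic b : ℝ) / ((b : ℝ) + 1) ^ 2) (∑' p, eulerHalfKernel p) := by
  let D : ℕ × ℕ → ℝ := fun p => if p.2 < p.1 then 1 / ((p.2 + 1) * ((p.1 : ℝ) + 1) ^ 2) else 0
  let e : ℕ × ℕ → ℕ × ℕ := fun p => (p.1 + p.2 + 1, p.1)
  have e_injective : e.Injective := fun p q h => by
    simp only [e, Prod.mk.injEq] at h
    ext <;> omega
  have D_eq_zero : ∀ p ∉ Set.range e, D p = 0 := fun p hp => if_neg fun hlt =>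
    hp ⟨(p.2, p.1 - p.2 - 1), by simp only [e]; ext <;> omega⟩
  have hD : HasSum D (∑' p, eulerHalfKernel p) := by
    refine (e_injective.hasSum_iff D_eq_zero).1 <|
      summable_eulerHalfKernel.hasSum.congr_fun fun p => ?_
    simp only [Function.comp_apply, D, e, eulerHalfKernel,
      if_pos (by omega : p.1 < p.1 + p.2 + 1)]
    push_cast
    ring
  refine hD.prod_fiberwise fun b => ?_
  have : HasSum (fun a => D (b, a)) (∑ a ∈ range b, D (b, a)) :=
    hasSum_sum_of_ne_finset_zero fun a ha => if_neg (by simpa using ha)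
  convert this using 1
  rw [cast_harmonic_eq_sum, sum_div]
  refine sum_congr rfl fun a ha => ?_
  simp only [D, if_pos (mem_range.1 ha)]
  field_simp

theorem hasSum_harmonic_succ_div_sq :
    HasSum (fun n : ℕ => (harmonic (n + 1) : ℝ) / ((n : ℝ) + 1) ^ 2)
      (2 * ∑' n : ℕ, 1 / ((n : ℝ) + 1) ^ 3) := by
  have hS := hasSum_harmonic_succ_div_sq_tsum_eulerKernel
  have hζ : HasSum (fun n : ℕ => 1 / ((n : ℝ) + 1) ^ 3) (∑' n : ℕ, 1 / ((n : ℝ) + 1) ^ 3) := by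
    refine Summable.hasSum ?_
    exact_mod_cast (summable_nat_add_iff 1).2 (Real.summable_one_div_nat_pow.2 (by norm_num))
  have hS' : HasSum (fun n : ℕ => (harmonic (n + 1) : ℝ) / ((n : ℝ) + 1) ^ 2)
      (∑' p, eulerHalfKernel p + ∑' n : ℕ, 1 / ((n : ℝ) + 1) ^ 3) :=
    (hasSum_harmonic_div_sq_tsum_eulerHalfKernel.add hζ).congr_fun fun n => by
      rw [harmonic_succ]; push_cast; field_simp
  have h := hS.unique hS'
  rw [tsum_eulerKernel_eq] at hS h
  convert hS using 1
  linarith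

theorem riemannZeta_three_eq_ofReal :
    riemannZeta 3 = ((∑' n : ℕ, 1 / ((n : ℝ) + 1) ^ 3 : ℝ) : ℂ) := by
  rw [zeta_eq_tsum_one_div_nat_add_one_cpow (by norm_num), Complex.ofReal_tsum]
  push_cast
  norm_cast

theorem euler_sum_two :
    HasSum (fun n : ℕ =>
        ((∑ j ∈ Finset.range (n + 1), (1 : ℝ) / (j + 1) : ℝ) : ℂ) / ((n : ℂ) + 1) ^ 2)
      (2 * riemannZeta 3) := by
  rw [riemannZeta_three_eq_ofReal]
  convert Complex.hasSum_ofReal.2 hasSum_harmonic_succ_div_sq using 1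
  · ext n
    rw [cast_harmonic_eq_sum]
    push_cast
    rfl
  · push_cast; rfl
end

section
/- The series ∑_{n=1}^∞ H_n / n^3 converges and equals (5/4) ζ(4). -/
/-!
Since `H_n / n^3 = ∑_{k ≤ n} 1 / (k n^3)`, splitting off the diagonal `k = n` writes the series as
`ζ(4) + T(1,0,3)`, where `T(r,s,t) = ∑_{x,y ≥ 1} 1 / (x^r y^s (x+y)^t)` is Tornheim's double series.
The partial fraction `1 / (x y) = (1 / x + 1 / y) / (x + y)` gives
`T(r+1,s+1,t) = T(r,s+1,t+1) + T(r+1,s,t+1)`, and `T` is symmetric in `r, s`. Hence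
`T(2,2,0) = 2 T(2,1,1) = 2 T(1,1,2) + 2 T(2,0,2)`, while cutting `T(2,2,0) = ζ(2)^2` along the
diagonal `x = y` gives `T(2,2,0) = 2 T(2,0,2) + ζ(4)`. So `T(1,1,2) = ζ(4) / 2`, and
`T(1,1,2) = 2 T(1,0,3)` yields `T(1,0,3) = ζ(4) / 4`; the value of `ζ(2)` is never needed.
-/

open Finset

noncomputable def upperDiagLowerEquiv : (ℕ × ℕ) ⊕ ℕ ⊕ (ℕ × ℕ) ≃ ℕ × ℕ :=
  Equiv.ofBijective
    (Sum.elim (fun p => (p.1, p.1 + p.2 + 1))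
      (Sum.elim (fun n => (n, n)) (fun p => (p.1 + p.2 + 1, p.1))))
    ⟨by
      rintro (⟨a, b⟩ | n | ⟨a, b⟩) (⟨c, d⟩ | m | ⟨c, d⟩) h <;>
        simp only [Sum.elim_inl, Sum.elim_inr, Prod.mk.injEq] at h <;> grind,
    by
      rintro ⟨m, n⟩
      rcases lt_trichotomy m n with h | rfl | h
      · exact ⟨.inl (m, n - m - 1), Prod.ext rfl (show m + (n - m - 1) + 1 = n by omega)⟩
      · exact ⟨.inr (.inl m), rfl⟩
      · exact ⟨.inr (.inr (n, m - n - 1)), Prod.ext (show n + (m - n - 1) + 1 = m by omega) rfl⟩⟩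

theorem HasSum.nat_prod_of_upper_diag_lower {α : Type*} [AddCommMonoid α] [TopologicalSpace α]
    [ContinuousAdd α] {f : ℕ × ℕ → α} {a b c : α}
    (hu : HasSum (fun p : ℕ × ℕ => f (p.1, p.1 + p.2 + 1)) a) (hd : HasSum (fun n => f (n, n)) b)
    (hl : HasSum (fun p : ℕ × ℕ => f (p.1 + p.2 + 1, p.1)) c) :
    HasSum f (a + (b + c)) :=
  upperDiagLowerEquiv.hasSum_iff.1 (hu.sum (hd.sum hl))

theorem summable_one_div_nat_add_one_pow {k : ℕ} (hk : 1 < k) :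
    Summable fun n : ℕ => 1 / ((n : ℝ) + 1) ^ k := by
  simpa using (summable_nat_add_iff 1).2 (Real.summable_one_div_nat_pow.2 hk)

theorem riemannZeta_natCast_eq_ofReal_tsum {k : ℕ} (hk : 1 < k) :
    riemannZeta k = ((∑' n : ℕ, 1 / ((n : ℝ) + 1) ^ k : ℝ) : ℂ) := by
  rw [zeta_eq_tsum_one_div_nat_add_one_cpow (by norm_cast), Complex.ofReal_tsum]
  push_cast
  simp only [Complex.cpow_natCast]

-- The pair `(a, b)` stands for `(x, y) = (a + 1, b + 1)`.
noncomputable def tornheimTerm (r s t : ℕ) (p : ℕ × ℕ) : ℝ :=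
  1 / (((p.1 : ℝ) + 1) ^ r * ((p.2 : ℝ) + 1) ^ s * ((p.1 : ℝ) + p.2 + 2) ^ t)

noncomputable def tornheim (r s t : ℕ) : ℝ := ∑' p, tornheimTerm r s t p

section Tornheim

variable {r s t : ℕ}

theorem tornheimTerm_nonneg (p : ℕ × ℕ) : 0 ≤ tornheimTerm r s t p := by
  unfold tornheimTerm; positivity

theorem tornheimTerm_swap (p : ℕ × ℕ) : tornheimTerm r s t p.swap = tornheimTerm s r t p := by
  simp only [tornheimTerm, Prod.fst_swap, Prod.snd_swap]
  ring

theorem tornheim_comm : tornheim r s t = tornheim s r t := by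
  rw [tornheim, ← (Equiv.prodComm ℕ ℕ).tsum_eq]
  exact tsum_congr tornheimTerm_swap

theorem tornheimTerm_succ_succ (p : ℕ × ℕ) :
    tornheimTerm (r + 1) (s + 1) t p =
      tornheimTerm r (s + 1) (t + 1) p + tornheimTerm (r + 1) s (t + 1) p := by
  simp only [tornheimTerm]
  have hx : (p.1 : ℝ) + 1 ≠ 0 := by positivity
  have hy : (p.2 : ℝ) + 1 ≠ 0 := by positivity
  have hxy : (p.1 : ℝ) + p.2 + 2 ≠ 0 := by positivity
  field_simp
  ring

theorem summable_tornheimTerm_of_succ_succ (h : Summable (tornheimTerm (r + 1) (s + 1) t)) :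
    Summable (tornheimTerm r (s + 1) (t + 1)) ∧ Summable (tornheimTerm (r + 1) s (t + 1)) := by
  constructor <;> refine h.of_nonneg_of_le tornheimTerm_nonneg fun p => ?_ <;>
    rw [tornheimTerm_succ_succ p]
  · exact le_add_of_nonneg_right (tornheimTerm_nonneg p)
  · exact le_add_of_nonneg_left (tornheimTerm_nonneg p)

theorem tornheim_succ_succ (h : Summable (tornheimTerm (r + 1) (s + 1) t)) :
    tornheim (r + 1) (s + 1) t = tornheim r (s + 1) (t + 1) + tornheim (r + 1) s (t + 1) := by
  obtain ⟨h₁, h₂⟩ := summable_tornheimTerm_of_succ_succ h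
  rw [tornheim, tornheim, tornheim, ← h₁.tsum_add h₂]
  exact tsum_congr tornheimTerm_succ_succ

theorem summable_tornheimTerm_zero (hr : 1 < r) (hs : 1 < s) :
    Summable (tornheimTerm r s 0) := by
  refine ((summable_one_div_nat_add_one_pow hr).mul_of_nonneg
    (summable_one_div_nat_add_one_pow hs) (fun _ => by positivity) fun _ => by positivity).congr
    fun p => ?_
  simp only [tornheimTerm, pow_zero, mul_one, one_div_mul_one_div]

theorem tornheim_self_self_zero (hr : 1 < r) :
    tornheim r r 0 = 2 * tornheim r 0 r + ∑' n : ℕ, 1 / ((n : ℝ) + 1) ^ (2 * r) := by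
  have hsum := summable_tornheimTerm_zero hr hr
  have hupper : ∀ p : ℕ × ℕ, tornheimTerm r r 0 (p.1, p.1 + p.2 + 1) = tornheimTerm r 0 r p := by
    intro p; simp only [tornheimTerm]; push_cast; ring
  have hlower : ∀ p : ℕ × ℕ, tornheimTerm r r 0 (p.1 + p.2 + 1, p.1) = tornheimTerm r 0 r p := by
    intro p; simp only [tornheimTerm]; push_cast; ring
  have hdiag : ∀ n : ℕ, tornheimTerm r r 0 (n, n) = 1 / ((n : ℝ) + 1) ^ (2 * r) := by
    intro n; simp only [tornheimTerm]; ring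
  have hT : Summable (tornheimTerm r 0 r) :=
    (hsum.comp_injective (upperDiagLowerEquiv.injective.comp Sum.inl_injective)).congr hupper
  have := HasSum.nat_prod_of_upper_diag_lower (f := tornheimTerm r r 0)
    (by simpa only [hupper] using hT.hasSum)
    (by simpa only [hdiag] using (summable_one_div_nat_add_one_pow (by omega)).hasSum)
    (by simpa only [hlower] using hT.hasSum)
  rw [tornheim, this.tsum_eq, tornheim]
  ring

end Tornheim

theorem summable_tornheimTerm_two_one_one : Summable (tornheimTerm 2 1 1) :=
  (summable_tornheimTerm_of_succ_succ (r := 1) (s := 1) (t := 0)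
    (summable_tornheimTerm_zero (by norm_num) (by norm_num))).2

theorem summable_tornheimTerm_one_one_two : Summable (tornheimTerm 1 1 2) :=
  (summable_tornheimTerm_of_succ_succ (r := 1) (s := 0) (t := 1)
    summable_tornheimTerm_two_one_one).1

theorem tornheim_one_one_two : tornheim 1 1 2 = (∑' n : ℕ, 1 / ((n : ℝ) + 1) ^ 4) / 2 := by
  have h220 : tornheim 2 2 0 = tornheim 1 2 1 + tornheim 2 1 1 :=
    tornheim_succ_succ (summable_tornheimTerm_zero (by norm_num) (by norm_num))
  have h211 : tornheim 2 1 1 = tornheim 1 1 2 + tornheim 2 0 2 :=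
    tornheim_succ_succ summable_tornheimTerm_two_one_one
  have hself := tornheim_self_self_zero (r := 2) (by norm_num)
  rw [tornheim_comm (r := 1)] at h220
  linarith

theorem tornheim_one_zero_three : tornheim 1 0 3 = (∑' n : ℕ, 1 / ((n : ℝ) + 1) ^ 4) / 4 := by
  have h112 : tornheim 1 1 2 = tornheim 0 1 3 + tornheim 1 0 3 :=
    tornheim_succ_succ summable_tornheimTerm_one_one_two
  rw [tornheim_comm (r := 0), tornheim_one_one_two] at h112
  linarith

theorem hasSum_harmonic_div_pow {m : ℕ} (hm : 0 < m) (h : Summable (tornheimTerm 1 0 m)) :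
    HasSum (fun n : ℕ => (∑ j ∈ range (n + 1), (1 : ℝ) / (j + 1)) / ((n : ℝ) + 1) ^ m)
      ((∑' n : ℕ, 1 / ((n : ℝ) + 1) ^ (m + 1)) + tornheim 1 0 m) := by
  set F : ℕ × ℕ → ℝ := fun p => if p.2 ≤ p.1 then 1 / (((p.2 : ℝ) + 1) * ((p.1 : ℝ) + 1) ^ m) else 0
  have hF : HasSum F (0 + ((∑' n : ℕ, 1 / ((n : ℝ) + 1) ^ (m + 1)) + tornheim 1 0 m)) := by
    refine HasSum.nat_prod_of_upper_diag_lower (hasSum_zero.congr_fun fun p => ?_)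
      ((summable_one_div_nat_add_one_pow (by omega)).hasSum.congr_fun fun n => ?_)
      (h.hasSum.congr_fun fun p => ?_)
    · simp only [F, if_neg (show ¬p.1 + p.2 + 1 ≤ p.1 by omega)]
    · simp only [F, le_refl, if_true]
      ring
    · simp only [F, if_pos (show p.1 ≤ p.1 + p.2 + 1 by omega), tornheimTerm]
      push_cast
      ring
  rw [zero_add] at hF
  refine hF.prod_fiberwise fun n => ?_
  have hfiber : (∑ j ∈ range (n + 1), (1 : ℝ) / (j + 1)) / ((n : ℝ) + 1) ^ m =
      ∑ k ∈ range (n + 1), F (n, k) := by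
    rw [sum_div]
    refine sum_congr rfl fun k hk => ?_
    simp only [F, if_pos (Nat.lt_succ_iff.1 (mem_range.1 hk)), div_div]
  rw [hfiber]
  exact hasSum_sum_of_ne_finset_zero fun k hk => if_neg (by simpa using hk)

theorem euler_sum_three :
    HasSum (fun n : ℕ =>
        ((∑ j ∈ Finset.range (n + 1), (1 : ℝ) / (j + 1) : ℝ) : ℂ) / ((n : ℂ) + 1) ^ 3)
      ((5 / 4) * riemannZeta 4) := by
  have hreal := hasSum_harmonic_div_pow (m := 3) (by norm_num)
    (summable_tornheimTerm_of_succ_succ summable_tornheimTerm_one_one_two).2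
  rw [tornheim_one_zero_three] at hreal
  rw [show (4 : ℂ) = ((4 : ℕ) : ℂ) by norm_num, riemannZeta_natCast_eq_ofReal_tsum (by norm_num)]
  convert Complex.hasSum_ofReal.2 hreal using 1
  · ext n
    push_cast
    rfl
  · push_cast
    ring
end

section
/- For real z with |z| < 2π, log((1 − e^{−z})/z) = ∑_{n=1}^∞ (B_n/n) · z^n/n!, where B_n are the Bernoulli numbers (with convention B_1 = -1/2 adjusted to match the expansion of z/(e^z−1)). -/
/-!
`(1 - e^{-z}) / z = e^{-z/2} · sinh (z/2) / (z/2)`, so the logarithm is `-z/2` plus the logarithm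
of Euler's product `sinh (π x) / (π x) = ∏ (1 + x² / n²)` with `x = z / 2π`. Expanding each
`log (1 + x² / n²)` in powers of `x² / n²` gives a double series that converges absolutely for
`|x| < 1`; summing it over `n` first produces the values `ζ(2m)`, i.e. the Bernoulli numbers
`B_{2m}`. Of the odd Bernoulli numbers only `B_1 = -1/2` is nonzero, and it accounts for `-z/2`.
-/

open Real Filter Finset Topology
open scoped Nat

theorem Real.tendsto_euler_sinh_prod (x : ℝ) :
    Tendsto (fun n : ℕ => π * x * ∏ j ∈ range n, (1 + x ^ 2 / ((j : ℝ) + 1) ^ 2))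
      atTop (𝓝 (sinh (π * x))) := by
  have h := (Complex.continuous_im.tendsto _).comp (Complex.tendsto_euler_sin_prod (x * Complex.I))
  convert h using 1
  · ext n
    have hprod : π * (x * Complex.I) * ∏ j ∈ range n, (1 - (x * Complex.I) ^ 2 / ((j : ℂ) + 1) ^ 2)
        = ((π * x * ∏ j ∈ range n, (1 + x ^ 2 / ((j : ℝ) + 1) ^ 2) : ℝ) : ℂ) * Complex.I := by
      push_cast
      simp only [mul_pow, Complex.I_sq, mul_neg_one, neg_div, sub_neg_eq_add]
      ring
    rw [Function.comp_apply, hprod, Complex.mul_I_im, Complex.ofReal_re]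
  · rw [← mul_assoc, Complex.sin_mul_I, ← Complex.ofReal_mul, ← Complex.ofReal_sinh,
      Complex.mul_I_im, Complex.ofReal_re]

theorem Real.sinh_div_self_pos {x : ℝ} (hx : x ≠ 0) : 0 < sinh x / x := by
  rcases hx.lt_or_gt with h | h
  · exact div_pos_of_neg_of_neg (sinh_neg_iff.2 h) h
  · exact div_pos (sinh_pos_iff.2 h) h

theorem Real.hasSum_log_one_add_sq_div_sq {x : ℝ} (hx : x ≠ 0) :
    HasSum (fun n : ℕ => log (1 + x ^ 2 / ((n : ℝ) + 1) ^ 2)) (log (sinh (π * x) / (π * x))) := by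
  have hπx : π * x ≠ 0 := mul_ne_zero pi_ne_zero hx
  have hprod : Tendsto (fun n : ℕ => ∏ j ∈ range n, (1 + x ^ 2 / ((j : ℝ) + 1) ^ 2)) atTop
      (𝓝 (sinh (π * x) / (π * x))) := by
    simpa only [mul_div_cancel_left₀ _ hπx] using (tendsto_euler_sinh_prod x).div_const (π * x)
  have hpos (n : ℕ) : 0 < 1 + x ^ 2 / ((n : ℝ) + 1) ^ 2 := by positivity
  rw [hasSum_iff_tendsto_nat_of_nonneg fun n => log_nonneg (le_add_of_nonneg_right (by positivity))]
  simpa only [Function.comp_def, ← log_prod fun j _ => (hpos j).ne'] using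
    (continuousAt_log (sinh_div_self_pos hπx).ne').tendsto.comp hprod

theorem Real.hasSum_log_one_add_of_abs_lt_one {s : ℝ} (hs : |s| < 1) :
    HasSum (fun k : ℕ => (-1) ^ k / ((k : ℝ) + 1) * s ^ (k + 1)) (log (1 + s)) := by
  have h := (hasSum_pow_div_log_of_abs_lt_one (x := -s) (by rwa [abs_neg])).neg
  rw [sub_neg_eq_add, neg_neg] at h
  refine h.congr_fun fun k => ?_
  rw [neg_pow, pow_succ]
  ring

theorem hasSum_sq_div_succ_sq_pow {m : ℕ} (hm : m ≠ 0) (x : ℝ) :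
    HasSum (fun n : ℕ => (x ^ 2 / ((n : ℝ) + 1) ^ 2) ^ m)
      ((-1) ^ (m + 1) * bernoulli (2 * m) * (2 * π * x) ^ (2 * m) / (2 * (2 * m)!)) := by
  obtain ⟨k, rfl⟩ := Nat.exists_eq_add_one_of_ne_zero hm
  have h := ((hasSum_nat_add_iff' 1).mpr (hasSum_zeta_nat hm)).mul_left (x ^ (2 * (k + 1)))
  -- the `n = 0` term of `hasSum_zeta_nat` is the junk value `1 / 0 = 0`
  rw [show 2 * (k + 1) - 1 = 2 * k + 1 by omega, sum_range_one, Nat.cast_zero,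
    zero_pow (by omega), div_zero, sub_zero] at h
  have hsum : (-1) ^ (k + 1 + 1) * bernoulli (2 * (k + 1)) * (2 * π * x) ^ (2 * (k + 1)) /
      (2 * (2 * (k + 1))!) = x ^ (2 * (k + 1)) * ((-1) ^ (k + 1 + 1) * 2 ^ (2 * k + 1) *
        π ^ (2 * (k + 1)) * bernoulli (2 * (k + 1)) / (2 * (k + 1))!) := by
    ring
  rw [hsum]
  refine h.congr_fun fun n => ?_
  rw [div_pow, ← pow_mul, ← pow_mul, mul_one_div, Nat.cast_succ]

theorem summable_log_one_add_sq_div_sq_series {x : ℝ} (hx : |x| < 1) :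
    Summable (fun p : ℕ × ℕ =>
      (-1) ^ p.1 / ((p.1 : ℝ) + 1) * (x ^ 2 / ((p.2 : ℝ) + 1) ^ 2) ^ (p.1 + 1)) := by
  have hx2 : x ^ 2 < 1 := (sq_lt_one_iff_abs_lt_one x).2 hx
  have hgeom : Summable (fun k : ℕ => (x ^ 2) ^ k) :=
    summable_geometric_of_lt_one (sq_nonneg x) hx2
  have hzeta : Summable (fun n : ℕ => 1 / ((n : ℝ) + 1) ^ 2) := by
    exact_mod_cast (summable_nat_add_iff 1).mpr (summable_one_div_nat_pow.mpr one_lt_two)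
  refine .of_norm_bounded
    (hgeom.mul_of_nonneg hzeta (fun k => by positivity) fun n => by positivity) ?_
  rintro ⟨k, n⟩
  calc ‖(-1) ^ k / ((k : ℝ) + 1) * (x ^ 2 / ((n : ℝ) + 1) ^ 2) ^ (k + 1)‖
      = (x ^ 2 / ((n : ℝ) + 1) ^ 2) ^ (k + 1) / ((k : ℝ) + 1) := by
        simp [abs_of_nonneg (by positivity : (0 : ℝ) ≤ k + 1), div_eq_inv_mul]
    _ ≤ (x ^ 2 / ((n : ℝ) + 1) ^ 2) ^ k * (x ^ 2 / ((n : ℝ) + 1) ^ 2) := by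
        rw [← pow_succ]
        exact div_le_self (by positivity) (by simp)
    _ ≤ (x ^ 2) ^ k * (1 / ((n : ℝ) + 1) ^ 2) := by
        gcongr
        exact div_le_self (sq_nonneg x) (one_le_pow₀ (by simp))

theorem hasSum_bernoulli_log_sinh_div {z : ℝ} (hz0 : z ≠ 0) (hz : |z| < 2 * π) :
    HasSum (fun k : ℕ => (bernoulli (2 * (k + 1)) : ℝ) / (2 * (k + 1)) * z ^ (2 * (k + 1)) /
      (2 * (k + 1))!) (log (sinh (z / 2) / (z / 2))) := by
  obtain ⟨x, rfl⟩ : ∃ x, z = 2 * π * x := ⟨z / (2 * π), by field_simp⟩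
  have hx0 : x ≠ 0 := right_ne_zero_of_mul hz0
  have hx : |x| < 1 := by
    rwa [abs_mul, abs_of_pos two_pi_pos, mul_lt_iff_lt_one_right two_pi_pos] at hz
  have hs (n : ℕ) : |x ^ 2 / ((n : ℝ) + 1) ^ 2| < 1 := by
    rw [abs_of_nonneg (by positivity : 0 ≤ x ^ 2 / ((n : ℝ) + 1) ^ 2)]
    exact (div_le_self (sq_nonneg x) (one_le_pow₀ (by simp))).trans_lt
      ((sq_lt_one_iff_abs_lt_one x).2 hx)
  have hF := summable_log_one_add_sq_div_sq_series hx
  have hbern := hF.hasSum.prod_fiberwise fun k =>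
    (hasSum_sq_div_succ_sq_pow k.add_one_ne_zero x).mul_left ((-1) ^ k / ((k : ℝ) + 1))
  have hlog := ((Equiv.prodComm ℕ ℕ).hasSum_iff.mpr hF.hasSum).prod_fiberwise fun n =>
    (hasSum_log_one_add_of_abs_lt_one (hs n) :)
  rw [hlog.unique (hasSum_log_one_add_sq_div_sq hx0)] at hbern
  rw [show 2 * π * x / 2 = π * x by ring]
  refine hbern.congr_fun fun k => ?_
  have hsign : (-1 : ℝ) ^ k * (-1) ^ (k + 1 + 1) = 1 := by
    rw [← pow_add]; exact Even.neg_one_pow ⟨k + 1, by ring⟩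
  field_simp
  rw [mul_assoc, hsign, mul_one]

theorem Real.log_one_sub_exp_neg_div {z : ℝ} (hz : z ≠ 0) :
    log ((1 - exp (-z)) / z) = -z / 2 + log (sinh (z / 2) / (z / 2)) := by
  have h : (1 - exp (-z)) / z = exp (-z / 2) * (sinh (z / 2) / (z / 2)) := by
    have e1 : exp (-z) = exp (-z / 2) ^ 2 := by rw [← exp_nat_mul]; ring_nf
    have e2 : exp (-(z / 2)) * exp (z / 2) = 1 := by rw [← exp_add]; ring_nf; exact exp_zero
    rw [sinh_eq, e1, neg_div]
    field_simp
    linear_combination -e2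
  rw [h, log_mul (exp_ne_zero _) (sinh_div_self_pos (by positivity)).ne', log_exp]

theorem log_one_sub_exp_div (z : ℝ) (hz : |z| < 2 * Real.pi) :
    HasSum (fun n : ℕ =>
        ((bernoulli (n + 1) : ℝ) / (n + 1)) * z ^ (n + 1) / (Nat.factorial (n + 1)))
      (Real.log ((1 - Real.exp (-z)) / z)) := by
  rcases eq_or_ne z 0 with rfl | hz0
  · simp -- both sides vanish, the right one as `log 0 = 0`
  rw [log_one_sub_exp_neg_div hz0]
  refine HasSum.even_add_odd ?_ ?_
  · have hB (k : ℕ) (hk : k ≠ 0) : bernoulli (2 * k + 1) = 0 :=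
      bernoulli_eq_zero_of_odd (odd_two_mul_add_one k) (by omega)
    convert hasSum_single 0 fun k hk => ?_ using 1
    · norm_num [bernoulli_one, neg_div, div_eq_inv_mul]
    · simp [hB k hk]
  · convert hasSum_bernoulli_log_sinh_div hz0 hz using 2 with k
    rw [show 2 * k + 1 + 1 = 2 * (k + 1) by ring]
    push_cast
    ring
end

section
/- For real z with 0 < z < 1, Li_2(e^{−z}) = ζ(2) + z log z − z + ∑_{n=1}^∞ (B_n/n) · z^{n+1} / ((n+1) · n!). -/
/-- The dilogarithm `Li_2(x) = ∑_{n ≥ 1} x^n / n^2`. -/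
noncomputable def Li2 (x : ℝ) : ℝ := ∑' n : ℕ, x ^ (n + 1) / ((n + 1 : ℕ) : ℝ) ^ 2

/-!
Both sides have derivative `log (1 - e^{-y})` on `(0, 1)` and tend to `ζ(2)` as `y → 0⁺`, hence
agree. On the left this is termwise differentiation of `Li₂` together with `Li₂(1) = ζ(2)`. On the
right, `(y log y - y)' = log y` and the Bernoulli series is a primitive of
`G(y) = ∑_{n ≥ 1} B_n yⁿ / (n · n!)`. The generating function `y / (eʸ - 1) = ∑ B_n yⁿ / n!` gives
`G' = 1 / (eʸ - 1) - 1 / y = (log (1 - e^{-y}) - log y)'`, and both functions vanish at `0⁺`, so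
`G(y) = log (1 - e^{-y}) - log y`. All these series converge for `|y| < 1` because `|B_n| ≤ n!`,
which follows inductively from `∑_{k ≤ n} B_k / (k! (n + 1 - k)!) = 0` for `n ≥ 1` and
`∑_{j ≥ 2} 1 / j! ≤ 1`.
-/

open Real Set Filter Topology Metric
open scoped Nat

theorem eqOn_Ioo_of_hasDerivAt_of_tendsto {E : Type*} [NormedAddCommGroup E] [NormedSpace ℝ E]
    {f g f' : ℝ → E} {a b : ℝ} {L : E}
    (hf : ∀ y ∈ Ioo a b, HasDerivAt f (f' y) y) (hg : ∀ y ∈ Ioo a b, HasDerivAt g (f' y) y)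
    (hfL : Tendsto f (𝓝[>] a) (𝓝 L)) (hgL : Tendsto g (𝓝[>] a) (𝓝 L)) :
    EqOn f g (Ioo a b) := by
  intro y hy
  obtain ⟨c, hc⟩ := isOpen_Ioo.exists_eq_add_of_deriv_eq isPreconnected_Ioo
    (fun x hx => (hf x hx).differentiableAt.differentiableWithinAt)
    (fun x hx => (hg x hx).differentiableAt.differentiableWithinAt)
    (fun x hx => (hf x hx).deriv.trans (hg x hx).deriv.symm)
  have hfc : Tendsto f (𝓝[>] a) (𝓝 (L + c)) :=
    (hgL.add_const c).congr' (eventuallyEq_of_mem (Ioo_mem_nhdsGT (hy.1.trans hy.2))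
      fun x hx => (hc hx).symm)
  have hc0 : c = 0 := left_eq_add.mp (tendsto_nhds_unique hfL hfc)
  simpa [hc0] using hc hy

theorem hasDerivAt_tsum_mul_pow_div {𝕜 : Type*} [RCLike 𝕜] {a : ℕ → 𝕜} {C : ℝ}
    (ha : ∀ n, ‖a n‖ ≤ C) (m : ℕ) {y : 𝕜} (hy : ‖y‖ < 1) :
    HasDerivAt (fun x => ∑' n, a n * x ^ (n + m + 1) / (n + m + 1 : ℕ))
      (∑' n, a n * y ^ (n + m)) y := by
  obtain ⟨r, hyr, hr1⟩ := exists_between hy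
  have hr0 : 0 ≤ r := (norm_nonneg y).trans hyr.le
  refine hasDerivAt_tsum_of_isPreconnected (u := fun n => C * r ^ n) (t := ball 0 r)
    (g := fun n x => a n * x ^ (n + m + 1) / (n + m + 1 : ℕ)) (g' := fun n x => a n * x ^ (n + m))
    ((summable_geometric_of_lt_one hr0 hr1).mul_left C) isOpen_ball (convex_ball 0 r).isPreconnected
    (fun n x _ => ?_) (fun n x hx => ?_) (mem_ball_self (hyr.trans_le' (norm_nonneg y))) ?_
    (mem_ball_zero_iff.mpr hyr)
  · refine (((hasDerivAt_pow (n + m + 1) x).const_mul (a n)).div_const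
      ((n + m + 1 : ℕ) : 𝕜)).congr_deriv ?_
    have hn : ((n + m + 1 : ℕ) : 𝕜) ≠ 0 := Nat.cast_ne_zero.mpr (Nat.succ_ne_zero _)
    rw [Nat.add_sub_cancel]
    field_simp
  · have hxr : ‖x‖ < r := mem_ball_zero_iff.mp hx
    have hpow : ‖x‖ ^ (n + m) ≤ r ^ n :=
      (pow_le_pow_of_le_one (norm_nonneg x) (hxr.trans hr1).le (by omega)).trans
        (pow_le_pow_left₀ (norm_nonneg x) hxr.le n)
    rw [norm_mul, norm_pow]
    exact mul_le_mul (ha n) hpow (by positivity) ((norm_nonneg _).trans (ha 0))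
  · -- summability at the base point `0`, where every term vanishes
    simp

theorem Real.hasSum_pow_succ_div_factorial (z : ℝ) :
    HasSum (fun n => z ^ (n + 1) / (n + 1)!) (exp z - 1) := by
  have h := (hasSum_nat_add_iff' 1).mpr
    (Real.exp_eq_exp_ℝ ▸ NormedSpace.expSeries_div_hasSum_exp z)
  simpa using h

theorem sum_bernoulli_div_factorial_mul_factorial (n : ℕ) :
    ∑ k ∈ Finset.range (n + 1), (bernoulli k : ℝ) / (k ! * (n + 1 - k)!) =
      if n = 0 then 1 else 0 := by
  have h : (∑ k ∈ Finset.range (n + 1), ((n + 1).choose k : ℝ) * bernoulli k) / (n + 1)! =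
      if n = 0 then 1 else 0 := by
    have := sum_bernoulli (n + 1)
    by_cases hn : n = 0
    · subst hn; simp
    · rw [if_neg (by omega)] at this
      rw [if_neg hn, div_eq_zero_iff]
      exact .inl (by exact_mod_cast this)
  rw [← h, Finset.sum_div]
  refine Finset.sum_congr rfl fun k hk => ?_
  rw [Nat.cast_choose ℝ (Finset.mem_range.mp hk).le]
  field_simp

theorem sum_range_one_div_factorial_le_one (m : ℕ) :
    ∑ k ∈ Finset.range m, (1 / (m + 1 - k)! : ℝ) ≤ 1 := by
  rw [← Finset.sum_range_reflect]
  calc ∑ j ∈ Finset.range m, (1 / (m + 1 - (m - 1 - j))! : ℝ)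
      ≤ ∑ j ∈ Finset.range m, (1 / 2 : ℝ) * (1 / 2) ^ j := by
        refine Finset.sum_le_sum fun j hj => ?_
        have hj : m + 1 - (m - 1 - j) = 1 + (j + 1) := by
          have := Finset.mem_range.mp hj; omega
        have h2 : 2 ^ (j + 1) ≤ (1 + (j + 1))! := by
          simpa using Nat.factorial_mul_pow_le_factorial (m := 1) (n := j + 1)
        rw [hj, ← _root_.pow_succ', div_pow, one_pow]
        gcongr
        exact_mod_cast h2
    _ ≤ 1 := by
        rw [← Finset.mul_sum]
        linarith [sum_geometric_two_le m]

theorem abs_bernoulli_le_factorial (n : ℕ) : |(bernoulli n : ℝ)| ≤ n ! := by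
  induction n using Nat.strong_induction_on with
  | _ n ih =>
  rcases n with _ | n
  · simp
  have hrec := sum_bernoulli_div_factorial_mul_factorial (n + 1)
  rw [Finset.sum_range_succ, if_neg n.succ_ne_zero, Nat.add_sub_cancel_left, Nat.factorial_one,
    Nat.cast_one, mul_one, ← neg_eq_iff_add_eq_zero] at hrec
  have hk : ∀ k ∈ Finset.range (n + 1),
      |(bernoulli k : ℝ) / (k ! * (n + 1 + 1 - k)!)| ≤ 1 / (n + 1 + 1 - k)! := fun k hk => by
    have hk : |(bernoulli k : ℝ)| ≤ k ! := ih k (by simpa using Finset.mem_range.mp hk)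
    rw [abs_div, abs_mul, Nat.abs_cast, Nat.abs_cast,
      div_le_div_iff₀ (by positivity) (by positivity), one_mul]
    exact mul_le_mul_of_nonneg_right hk (Nat.cast_nonneg _)
  have := (Finset.abs_sum_le_sum_abs _ _).trans
    ((Finset.sum_le_sum hk).trans (sum_range_one_div_factorial_le_one (n + 1)))
  rwa [← abs_neg, hrec, abs_div, Nat.abs_cast, div_le_one (by positivity)] at this

theorem abs_bernoulli_succ_div_factorial_le_one (n : ℕ) :
    |(bernoulli (n + 1) : ℝ) / (n + 1)!| ≤ 1 := by
  rw [abs_div, Nat.abs_cast]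
  exact div_le_one_of_le₀ (abs_bernoulli_le_factorial _) (Nat.cast_nonneg _)

theorem hasSum_bernoulli_div_factorial_mul_pow {z : ℝ} (hz : z ≠ 0) (hz1 : |z| < 1) :
    HasSum (fun n => (bernoulli n : ℝ) / n ! * z ^ n) (z / (exp z - 1)) := by
  set f : ℕ → ℝ := fun n => (bernoulli n : ℝ) / n ! * z ^ n
  set g : ℕ → ℝ := fun n => z ^ (n + 1) / (n + 1)!
  have hf : Summable (‖f ·‖) := by
    refine (summable_geometric_of_lt_one (abs_nonneg z) hz1).of_nonneg_of_le
      (fun _ => norm_nonneg _) fun n => ?_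
    rw [norm_mul, norm_pow, norm_div, Real.norm_eq_abs, Real.norm_eq_abs, Nat.abs_cast]
    exact mul_le_of_le_one_left (by positivity)
      (div_le_one_of_le₀ (abs_bernoulli_le_factorial n) (Nat.cast_nonneg _))
  have hg : Summable (‖g ·‖) := by
    simpa [g, norm_div, norm_pow] using
      (summable_nat_add_iff 1).mpr (Real.summable_pow_div_factorial |z|)
  have hinner (n : ℕ) :
      ∑ k ∈ Finset.range (n + 1), f k * g (n - k) = if n = 0 then z else 0 := by
    calc ∑ k ∈ Finset.range (n + 1), f k * g (n - k)
        = z ^ (n + 1) *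
            ∑ k ∈ Finset.range (n + 1), (bernoulli k : ℝ) / (k ! * (n + 1 - k)!) := by
          rw [Finset.mul_sum]
          refine Finset.sum_congr rfl fun k hk => ?_
          have hkn := Finset.mem_range.mp hk
          have hidx : n - k + 1 = n + 1 - k := by omega
          have hpow : z ^ (n + 1) = z ^ k * z ^ (n + 1 - k) := by rw [← pow_add]; congr 1; omega
          simp only [f, g, hidx, hpow]
          field_simp
      _ = if n = 0 then z else 0 := by
          rw [sum_bernoulli_div_factorial_mul_factorial]
          split_ifs with hn <;> simp [hn]
  have hprod := hasSum_sum_range_mul_of_summable_norm hf hg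
  simp only [hinner] at hprod
  have hfg : (∑' n, f n) * (exp z - 1) = z := by
    rw [← (Real.hasSum_pow_succ_div_factorial z).tsum_eq]
    exact hprod.unique (hasSum_ite_eq 0 z)
  have hexp : exp z - 1 ≠ 0 := sub_ne_zero.mpr (by simpa using hz)
  rw [← eq_div_of_mul_eq hexp hfg]
  exact hf.of_norm.hasSum

theorem hasSum_bernoulli_succ_div_factorial_mul_pow {y : ℝ} (hy0 : y ≠ 0) (hy : |y| < 1) :
    HasSum (fun n : ℕ => (bernoulli (n + 1) : ℝ) / (n + 1)! * y ^ n)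
      (1 / (exp y - 1) - 1 / y) := by
  have h :=
    ((hasSum_nat_add_iff' 1).mpr (hasSum_bernoulli_div_factorial_mul_pow hy0 hy)).div_const y
  have hval : (y / (exp y - 1) - ∑ i ∈ Finset.range 1, (bernoulli i : ℝ) / i ! * y ^ i) / y =
      1 / (exp y - 1) - 1 / y := by
    have hexp : exp y - 1 ≠ 0 := sub_ne_zero.mpr (by simpa using hy0)
    simp only [Finset.range_one, Finset.sum_singleton, bernoulli_zero, Rat.cast_one,
      Nat.factorial_zero, Nat.cast_one, div_one, pow_zero, mul_one]
    field_simp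
  rw [hval] at h
  refine h.congr_fun fun n => ?_
  field_simp
  ring

theorem hasDerivAt_Li2 {x : ℝ} (hx0 : x ≠ 0) (hx : |x| < 1) :
    HasDerivAt Li2 (-log (1 - x) / x) x := by
  have hLi2 :
      Li2 = fun x => ∑' n, 1 / ((n + 1 : ℕ) : ℝ) * x ^ (n + 0 + 1) / (n + 0 + 1 : ℕ) :=
    funext fun x => tsum_congr fun n => by ring
  have hlog :
      HasSum (fun n : ℕ => 1 / ((n + 1 : ℕ) : ℝ) * x ^ (n + 0)) (-log (1 - x) / x) := by
    refine ((hasSum_pow_div_log_of_abs_lt_one hx).div_const x).congr_fun fun n => ?_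
    field_simp
    push_cast
    ring
  rw [hLi2, ← hlog.tsum_eq]
  refine hasDerivAt_tsum_mul_pow_div (C := 1) (fun n => ?_) 0 hx
  rw [Real.norm_eq_abs, abs_of_pos (by positivity)]
  exact div_le_one_of_le₀ (by simp) (by positivity)

theorem hasDerivAt_Li2_exp_neg {y : ℝ} (hy : 0 < y) :
    HasDerivAt (fun y => Li2 (exp (-y))) (log (1 - exp (-y))) y := by
  have hexp : |exp (-y)| < 1 := by
    rw [abs_of_pos (exp_pos _)]
    exact exp_lt_one_iff.mpr (neg_lt_zero.mpr hy)
  refine ((hasDerivAt_Li2 (exp_pos _).ne' hexp).comp y (hasDerivAt_neg y).exp).congr_deriv ?_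
  field_simp [(exp_pos (-y)).ne']

theorem continuousOn_Li2 : ContinuousOn Li2 (Icc (-1) 1) := by
  have hu : Summable fun n : ℕ => 1 / ((n + 1 : ℕ) : ℝ) ^ 2 :=
    (summable_nat_add_iff 1 (f := fun n : ℕ => 1 / (n : ℝ) ^ 2)).mpr
      (Real.summable_one_div_nat_pow.mpr one_lt_two)
  refine continuousOn_tsum (fun n => (continuous_pow (n + 1)).continuousOn.div_const _) hu
    fun n x hx => ?_
  rw [norm_div, norm_pow, norm_pow, Real.norm_eq_abs, Real.norm_natCast]
  gcongr
  exact pow_le_one₀ (abs_nonneg x) (abs_le.mpr hx)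

theorem Li2_one : Li2 1 = π ^ 2 / 6 := by
  simpa [Li2] using ((hasSum_nat_add_iff' 1).mpr hasSum_zeta_two).tsum_eq

theorem tendsto_Li2_exp_neg :
    Tendsto (fun y => Li2 (exp (-y))) (𝓝[>] 0) (𝓝 (π ^ 2 / 6)) := by
  have hexp : Tendsto (fun y : ℝ => exp (-y)) (𝓝[>] 0) (𝓝[Icc (-1) 1] 1) := by
    refine tendsto_nhdsWithin_iff.mpr ⟨?_, eventually_nhdsWithin_of_forall fun y hy => ?_⟩
    · exact (continuous_neg.rexp.tendsto' 0 1 (by simp)).mono_left nhdsWithin_le_nhds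
    · exact ⟨by linarith [exp_pos (-y)], exp_le_one_iff.mpr (by simp at hy; linarith)⟩
  rw [← Li2_one]
  exact (continuousOn_Li2 1 ⟨by norm_num, le_rfl⟩).tendsto.comp hexp

noncomputable def bernoulliLogSeries (y : ℝ) : ℝ :=
  ∑' n : ℕ, (bernoulli (n + 1) : ℝ) / (n + 1)! * y ^ (n + 1) / (n + 1 : ℕ)

theorem hasDerivAt_bernoulliLogSeries {y : ℝ} (hy : |y| < 1) :
    HasDerivAt bernoulliLogSeries (∑' n : ℕ, (bernoulli (n + 1) : ℝ) / (n + 1)! * y ^ n) y :=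
  hasDerivAt_tsum_mul_pow_div abs_bernoulli_succ_div_factorial_le_one 0 hy

theorem tendsto_log_one_sub_exp_neg_sub_log :
    Tendsto (fun y => log (1 - exp (-y)) - log y) (𝓝[>] 0) (𝓝 0) := by
  have hslope : Tendsto (fun t => t⁻¹ * (1 - exp (-t))) (𝓝[>] 0) (𝓝 1) := by
    simpa using ((hasDerivAt_neg (0 : ℝ)).exp.const_sub 1).tendsto_slope_zero_right
  have hlog := (continuousAt_log one_ne_zero).tendsto.comp hslope
  rw [log_one] at hlog
  refine hlog.congr' (eventually_nhdsWithin_of_forall fun t (ht : 0 < t) => ?_)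
  have hexp : 1 - exp (-t) ≠ 0 := (sub_pos.mpr (exp_lt_one_iff.mpr (neg_lt_zero.mpr ht))).ne'
  rw [Function.comp_apply, log_mul (inv_ne_zero ht.ne') hexp, log_inv]
  ring

theorem bernoulliLogSeries_eq_log {y : ℝ} (hy : y ∈ Ioo 0 1) :
    bernoulliLogSeries y = log (1 - exp (-y)) - log y := by
  refine eqOn_Ioo_of_hasDerivAt_of_tendsto (f' := fun y => 1 / (exp y - 1) - 1 / y)
    (fun y hy => ?_) (fun y hy => ?_) ?_ tendsto_log_one_sub_exp_neg_sub_log hy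
  · have hy1 : |y| < 1 := abs_lt.mpr ⟨by linarith [hy.1], hy.2⟩
    rw [← (hasSum_bernoulli_succ_div_factorial_mul_pow hy.1.ne' hy1).tsum_eq]
    exact hasDerivAt_bernoulliLogSeries hy1
  · have hexp : 1 - exp (-y) ≠ 0 := (sub_pos.mpr (exp_lt_one_iff.mpr (neg_lt_zero.mpr hy.1))).ne'
    refine ((((hasDerivAt_neg y).exp.const_sub 1).log hexp).sub
      (hasDerivAt_log hy.1.ne')).congr_deriv ?_
    rw [exp_neg] at hexp ⊢
    field_simp
  · have h0 : bernoulliLogSeries 0 = 0 := by simp [bernoulliLogSeries]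
    have hcont := (hasDerivAt_bernoulliLogSeries (y := 0) (by simp)).continuousAt
    simpa [h0] using hcont.tendsto.mono_left nhdsWithin_le_nhds

noncomputable def bernoulliDilogSeries (y : ℝ) : ℝ :=
  ∑' n : ℕ, ((bernoulli (n + 1) : ℝ) / (n + 1)) * y ^ (n + 2) / ((n + 2) * (n + 1)!)

theorem hasDerivAt_bernoulliDilogSeries {y : ℝ} (hy : |y| < 1) :
    HasDerivAt bernoulliDilogSeries (bernoulliLogSeries y) y := by
  have ha (n : ℕ) : |(bernoulli (n + 1) : ℝ) / (n + 1)! / (n + 1)| ≤ 1 := by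
    rw [abs_div, abs_of_pos (by positivity : (0 : ℝ) < n + 1)]
    exact div_le_one_of_le₀ ((abs_bernoulli_succ_div_factorial_le_one n).trans (by simp))
      (by positivity)
  have hDilog : bernoulliDilogSeries = fun x => ∑' n : ℕ,
      (bernoulli (n + 1) : ℝ) / (n + 1)! / (n + 1) * x ^ (n + 1 + 1) / (n + 1 + 1 : ℕ) :=
    funext fun x => tsum_congr fun n => by push_cast; field_simp; ring
  have hLog : bernoulliLogSeries y =
      ∑' n : ℕ, (bernoulli (n + 1) : ℝ) / (n + 1)! / (n + 1) * y ^ (n + 1) :=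
    tsum_congr fun n => by push_cast; ring
  rw [hDilog, hLog]
  exact hasDerivAt_tsum_mul_pow_div ha 1 hy

theorem dilog_exp_expansion (z : ℝ) (hz0 : 0 < z) (hz1 : z < 1) :
    Li2 (Real.exp (-z))
      = Real.pi ^ 2 / 6 + z * Real.log z - z
        + ∑' n : ℕ, ((bernoulli (n + 1) : ℝ) / (n + 1)) * z ^ (n + 2)
            / ((n + 2) * (Nat.factorial (n + 1))) := by
  refine eqOn_Ioo_of_hasDerivAt_of_tendsto (g := fun y => π ^ 2 / 6 + y * log y - y +
    bernoulliDilogSeries y) (fun y hy => hasDerivAt_Li2_exp_neg hy.1) (fun y hy => ?_)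
    tendsto_Li2_exp_neg ?_ ⟨hz0, hz1⟩
  · have hy1 : |y| < 1 := abs_lt.mpr ⟨by linarith [hy.1], hy.2⟩
    refine ((((hasDerivAt_mul_log hy.1.ne').const_add _).sub (hasDerivAt_id y)).add
      (hasDerivAt_bernoulliDilogSeries hy1)).congr_deriv ?_
    rw [bernoulliLogSeries_eq_log hy]
    ring
  · have h0 : bernoulliDilogSeries 0 = 0 := by simp [bernoulliDilogSeries]
    have hcont : ContinuousAt (fun y => π ^ 2 / 6 + y * log y - y + bernoulliDilogSeries y) 0 :=
      ((continuous_mul_log.continuousAt.const_add _).sub continuousAt_id).add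
        (hasDerivAt_bernoulliDilogSeries (y := 0) (by simp)).continuousAt
    simpa [h0] using hcont.tendsto.mono_left nhdsWithin_le_nhds
end

section
/- For real z with 0 < z < π, ∫_0^∞ e^{−xz} ψ(x+1) dx = (e^z/(e^z − 1)) ∫_0^1 e^{−yz} ψ(y+1) dy + (1/(e^z − 1)) ∫_0^∞ e^{−xz}/(x+1) dx. -/
/-!
Splitting `(0, ∞)` at `1` and shifting the tail by `1` turns the functional equation
`ψ(x + 2) = ψ(x + 1) + 1/(x + 1)` into the linear equation `F = A + e^{-z} (F + G)` for
`F = ∫₀^∞ e^{-xz} ψ(x+1) dx`, `A = ∫₀¹ e^{-yz} ψ(y+1) dy` and `G = ∫₀^∞ e^{-xz}/(x+1) dx`;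
solving it gives the formula. The integrals converge because `ψ` is monotone (log-convexity of
`Γ`) with `ψ(x + 1) ≤ log (x + 1) ≤ x`.
-/

open MeasureTheory

/-- The digamma function ψ = Γ'/Γ, as the derivative of log ∘ Γ on (0,∞). -/
noncomputable def digamma (x : ℝ) : ℝ := deriv (fun y : ℝ => Real.log (Real.Gamma y)) x

open Set Real

lemma differentiableAt_log_Gamma {x : ℝ} (hx : 0 < x) :
    DifferentiableAt ℝ (fun y => log (Gamma y)) x := by
  have hm : ∀ m : ℕ, x ≠ -m := fun m => by linarith [(m.cast_nonneg : (0 : ℝ) ≤ m)]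
  exact (differentiableAt_Gamma hm).log (Gamma_ne_zero hm)

lemma log_Gamma_add_one {x : ℝ} (hx : 0 < x) :
    log (Gamma (x + 1)) = log (Gamma x) + log x := by
  rw [Gamma_add_one hx.ne', log_mul hx.ne' (Gamma_pos_of_pos hx).ne', add_comm]

lemma digamma_add_one {x : ℝ} (hx : 0 < x) : digamma (x + 1) = digamma x + 1 / x := by
  unfold digamma
  rw [← deriv_comp_add_const, one_div, ← deriv_log,
    ← deriv_add (differentiableAt_log_Gamma hx) (differentiableAt_log hx.ne')]
  apply Filter.EventuallyEq.deriv_eq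
  filter_upwards [eventually_gt_nhds hx] using fun y hy => log_Gamma_add_one hy

lemma monotoneOn_digamma : MonotoneOn digamma (Ioi 0) :=
  convexOn_log_Gamma.monotoneOn_deriv fun _ hx => differentiableAt_log_Gamma hx

lemma digamma_le_log {x : ℝ} (hx : 0 < x) : digamma x ≤ log x := by
  have h := convexOn_log_Gamma.deriv_le_slope (mem_Ioi.mpr hx)
    (mem_Ioi.mpr (by linarith : (0 : ℝ) < x + 1)) (lt_add_one x) (differentiableAt_log_Gamma hx)
  rwa [slope_def_field, Function.comp_apply, Function.comp_apply, log_Gamma_add_one hx,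
    add_sub_cancel_left, add_sub_cancel_left, div_one] at h

lemma abs_digamma_add_one_le {x : ℝ} (hx : 0 ≤ x) : |digamma (x + 1)| ≤ |digamma 1| + x := by
  have hlow : digamma 1 ≤ digamma (x + 1) :=
    monotoneOn_digamma (mem_Ioi.mpr one_pos) (mem_Ioi.mpr (by linarith)) (by linarith)
  have hup : digamma (x + 1) ≤ x :=
    (digamma_le_log (by linarith)).trans ((log_le_sub_one_of_pos (by linarith)).trans_eq
      (add_sub_cancel_right x 1))
  rw [abs_le]
  constructor <;> linarith [neg_abs_le (digamma 1), abs_nonneg (digamma 1)]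

lemma integrableOn_exp_mul_digamma_add_one {z : ℝ} (hz : 0 < z) :
    IntegrableOn (fun x => exp (-x * z) * digamma (x + 1)) (Ioi 0) := by
  have hmaj : IntegrableOn
      (fun x => |digamma 1| * exp (-z * x) + x ^ (1 : ℝ) * exp (-z * x ^ (1 : ℝ))) (Ioi 0) :=
    ((exp_neg_integrableOn_Ioi 0 hz).const_mul _).add
      (integrableOn_rpow_mul_exp_neg_mul_rpow (by norm_num) one_pos hz)
  refine hmaj.mono' ?_ ?_
  · exact ((measurable_id.neg.mul_const z).exp.mul
      ((measurable_deriv _).comp (measurable_id.add_const 1))).aestronglyMeasurable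
  · filter_upwards [ae_restrict_mem measurableSet_Ioi] with x hx
    calc ‖exp (-x * z) * digamma (x + 1)‖ = exp (-x * z) * |digamma (x + 1)| := by
          rw [norm_mul, norm_of_nonneg (exp_pos _).le, norm_eq_abs]
      _ ≤ exp (-x * z) * (|digamma 1| + x) := by
          gcongr; exact abs_digamma_add_one_le (le_of_lt hx)
      _ = _ := by rw [rpow_one, show -z * x = -x * z by ring]; ring

lemma integrableOn_exp_mul_div_add_one {z : ℝ} (hz : 0 < z) :
    IntegrableOn (fun x => exp (-x * z) / (x + 1)) (Ioi 0) := by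
  refine (exp_neg_integrableOn_Ioi 0 hz).mono' ?_ ?_
  · exact ((measurable_id.neg.mul_const z).exp.div
      (measurable_id.add_const 1)).aestronglyMeasurable
  · filter_upwards [ae_restrict_mem measurableSet_Ioi] with x hx
    have hx1 : 1 ≤ x + 1 := by linarith [mem_Ioi.mp hx]
    rw [norm_of_nonneg (by positivity), show -z * x = -x * z by ring]
    exact div_le_self (exp_pos _).le hx1

lemma setIntegral_Ioi_comp_add_right {E : Type*} [NormedAddCommGroup E] [NormedSpace ℝ E]
    (f : ℝ → E) (a c : ℝ) : ∫ x in Ioi a, f (x + c) = ∫ x in Ioi (a + c), f x := by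
  rw [← (measurePreserving_add_right volume c).setIntegral_preimage_emb
    (measurableEmbedding_addRight c) f (Ioi (a + c)), preimage_add_const_Ioi, add_sub_cancel_right]

theorem laplace_digamma_formula_general (z : ℝ) (hz0 : 0 < z) :
    (∫ x in Set.Ioi (0 : ℝ), Real.exp (-x * z) * digamma (x + 1))
      = (Real.exp z / (Real.exp z - 1))
          * (∫ y in (0 : ℝ)..1, Real.exp (-y * z) * digamma (y + 1))
        + (1 / (Real.exp z - 1))
          * ∫ x in Set.Ioi (0 : ℝ), Real.exp (-x * z) / (x + 1) := by
  set f : ℝ → ℝ := fun x => exp (-x * z) * digamma (x + 1)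
  set g : ℝ → ℝ := fun x => exp (-x * z) / (x + 1)
  have hf : IntegrableOn f (Ioi 0) := integrableOn_exp_mul_digamma_add_one hz0
  have hg : IntegrableOn g (Ioi 0) := integrableOn_exp_mul_div_add_one hz0
  have hshift : ∀ x ∈ Ioi (0 : ℝ), f (x + 1) = exp (-z) * (f x + g x) := fun x hx => by
    simp only [f, g, digamma_add_one (by linarith [mem_Ioi.mp hx] : 0 < x + 1),
      show -(x + 1) * z = -x * z + -z by ring, exp_add]
    ring
  have htail : ∫ x in Ioi 1, f x = exp (-z) * ((∫ x in Ioi 0, f x) + ∫ x in Ioi 0, g x) := by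
    rw [← zero_add (1 : ℝ), ← setIntegral_Ioi_comp_add_right,
      setIntegral_congr_fun measurableSet_Ioi hshift, integral_const_mul, integral_add hf hg]
  have hrec : ∫ x in Ioi 0, f x
      = (∫ x in (0 : ℝ)..1, f x) + exp (-z) * ((∫ x in Ioi 0, f x) + ∫ x in Ioi 0, g x) := by
    rw [← htail, intervalIntegral.integral_interval_add_Ioi hf
      (hf.mono_set (Ioi_subset_Ioi zero_le_one))]
  have hexp : exp z - 1 ≠ 0 := (sub_pos.mpr (one_lt_exp_iff.mpr hz0)).ne'
  rw [exp_neg] at hrec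
  field_simp at hrec ⊢
  linarith

theorem laplace_digamma_formula (z : ℝ) (hz0 : 0 < z) (hzpi : z < Real.pi) :
    (∫ x in Set.Ioi (0 : ℝ), Real.exp (-x * z) * digamma (x + 1))
      = (Real.exp z / (Real.exp z - 1))
          * (∫ y in (0 : ℝ)..1, Real.exp (-y * z) * digamma (y + 1))
        + (1 / (Real.exp z - 1))
          * ∫ x in Set.Ioi (0 : ℝ), Real.exp (-x * z) / (x + 1) :=
  laplace_digamma_formula_general z hz0
end
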